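/- arXiv:1711.00163 — 3 statements merged into one kernel-verified Lean document; each statement's English description precedes it below -/
import Mathlib

section
/- Let k be a field and n ≥ 1. Suppose ū₁, ū₂ ∈ M_n(k) are lower triangular with all diagonal entries 1, u₁, u₂ ∈ M_n(k) are upper triangular with all diagonal entries 1, and ĥ₁, ĥ₂ ∈ M_n(k) are diagonal matrices whose first n−1 diagonal entries are all nonzero and whose last diagonal entry is 0. If ū₁·ĥ₁·u₁ = ū₂·ĥ₂·u₂, then ū₁ = ū₂, ĥ₁ = ĥ₂, and u₁ = u₂. -/
/-!
Cancelling the outer factors, `L := ū₂⁻¹ ū₁` (lower unitriangular) and `U := u₂ u₁⁻¹`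
(upper unitriangular) satisfy `L ĥ₁ = ĥ₂ U`, i.e. `L s t * d₁ t = d₂ s * U s t`. Below the diagonal
`U` vanishes and `d₁ t ≠ 0` since `t` is not the last index, so `L` vanishes there too; symmetrically
above the diagonal. Hence `L = U = 1`, and then `d₁ = d₂`.
-/

open Function Matrix OrderDual

namespace Matrix

variable {m α R : Type*}

section BlockTriangular

variable [Fintype m] [LinearOrder α] {b : m → α}

theorem BlockTriangular.mul_apply_self [NonUnitalNonAssocSemiring R] {M N : Matrix m m R}
    (hb : Injective b) (hM : M.BlockTriangular b) (hN : N.BlockTriangular b) (i : m) :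
    (M * N) i i = M i i * N i i := by
  rw [mul_apply]
  refine Finset.sum_eq_single i (fun k _ hki => ?_) (by simp)
  rcases (hb.ne hki).lt_or_gt with h | h
  · rw [hM h, zero_mul]
  · rw [hN h, mul_zero]

theorem BlockTriangular.mul_apply_self_eq_one [NonAssocSemiring R] {M N : Matrix m m R}
    (hb : Injective b) (hM : M.BlockTriangular b) (hN : N.BlockTriangular b)
    (hM1 : ∀ i, M i i = 1) (hN1 : ∀ i, N i i = 1) (i : m) : (M * N) i i = 1 := by
  rw [hM.mul_apply_self hb hN, hM1, hN1, one_mul]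

theorem BlockTriangular.inv_apply_self_eq_one [DecidableEq m] [CommRing R] {M : Matrix m m R}
    [Invertible M] (hb : Injective b) (hM : M.BlockTriangular b) (hM1 : ∀ i, M i i = 1)
    (i : m) : M⁻¹ i i = 1 := by
  have := (blockTriangular_inv_of_blockTriangular hM).mul_apply_self hb hM i
  rwa [inv_mul_of_invertible, one_apply_eq, hM1, mul_one, eq_comm] at this

end BlockTriangular

variable [LinearOrder m]

theorem eq_one_of_isLowerTriangular_of_isUpperTriangular [Zero R] [One R] {M : Matrix m m R}
    (hl : M.IsLowerTriangular) (hu : M.IsUpperTriangular) (hM1 : ∀ i, M i i = 1) : M = 1 := by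
  ext i j
  rcases lt_trichotomy i j with hij | rfl | hij
  · rw [hl hij, one_apply_ne hij.ne]
  · rw [hM1, one_apply_eq]
  · rw [hu hij, one_apply_ne hij.ne']

variable [Fintype m]

theorem det_eq_one_of_isUpperTriangular [CommRing R] {M : Matrix m m R}
    (hM : M.IsUpperTriangular) (hM1 : ∀ i, M i i = 1) : M.det = 1 := by
  simp [det_of_isUpperTriangular hM, hM1]

theorem det_eq_one_of_isLowerTriangular [CommRing R] {M : Matrix m m R}
    (hM : M.IsLowerTriangular) (hM1 : ∀ i, M i i = 1) : M.det = 1 := by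
  simp [det_of_isLowerTriangular M hM, hM1]

theorem eq_one_of_mul_diagonal_eq_diagonal_mul [Semiring R] [NoZeroDivisors R]
    {L U : Matrix m m R} {d₁ d₂ : m → R}
    (hL : L.IsLowerTriangular) (hL1 : ∀ i, L i i = 1)
    (hU : U.IsUpperTriangular) (hU1 : ∀ i, U i i = 1)
    (hd₁ : ∀ i, ¬IsMax i → d₁ i ≠ 0) (hd₂ : ∀ i, ¬IsMax i → d₂ i ≠ 0)
    (h : L * diagonal d₁ = diagonal d₂ * U) :
    L = 1 ∧ U = 1 ∧ d₁ = d₂ := by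
  have entry (i j : m) : L i j * d₁ j = d₂ i * U i j := by
    simpa only [mul_diagonal, diagonal_mul] using congr_fun₂ h i j
  have hLu : L.IsUpperTriangular := fun i j (hji : j < i) => by
    have := entry i j
    rw [hU hji, mul_zero] at this
    exact (mul_eq_zero.mp this).resolve_right (hd₁ j (not_isMax_of_lt hji))
  have hUl : U.IsLowerTriangular := fun i j (hij : i < j) => by
    have := entry i j
    rw [hL hij, zero_mul, eq_comm] at this
    exact (mul_eq_zero.mp this).resolve_left (hd₂ i (not_isMax_of_lt hij))
  exact ⟨eq_one_of_isLowerTriangular_of_isUpperTriangular hL hLu hL1,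
    eq_one_of_isLowerTriangular_of_isUpperTriangular hUl hU hU1,
    funext fun i => by simpa [hL1, hU1] using entry i i⟩

end Matrix

theorem Fin.val_lt_sub_one_of_not_isMax {n : ℕ} {i : Fin n} (hi : ¬IsMax i) : (i : ℕ) < n - 1 := by
  obtain ⟨j, hij⟩ := not_isMax_iff.mp hi
  omega

theorem stmt2 (k : Type*) [Field k] (n : ℕ)
    (ub₁ ub₂ u₁ u₂ : Matrix (Fin n) (Fin n) k) (d₁ d₂ : Fin n → k)
    (hub₁lo : ∀ s t : Fin n, s < t → ub₁ s t = 0) (hub₁diag : ∀ s : Fin n, ub₁ s s = 1)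
    (hub₂lo : ∀ s t : Fin n, s < t → ub₂ s t = 0) (hub₂diag : ∀ s : Fin n, ub₂ s s = 1)
    (hu₁up : ∀ s t : Fin n, t < s → u₁ s t = 0) (hu₁diag : ∀ s : Fin n, u₁ s s = 1)
    (hu₂up : ∀ s t : Fin n, t < s → u₂ s t = 0) (hu₂diag : ∀ s : Fin n, u₂ s s = 1)
    (hd₁ : ∀ s : Fin n, (s : ℕ) < n - 1 → d₁ s ≠ 0)
    (hd₂ : ∀ s : Fin n, (s : ℕ) < n - 1 → d₂ s ≠ 0)
    (heq : ub₁ * Matrix.diagonal d₁ * u₁ = ub₂ * Matrix.diagonal d₂ * u₂) :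
    ub₁ = ub₂ ∧ d₁ = d₂ ∧ u₁ = u₂ := by
  have hub₁ : ub₁.IsLowerTriangular := fun s t => hub₁lo s t
  have hub₂ : ub₂.IsLowerTriangular := fun s t => hub₂lo s t
  have hu₁ : u₁.IsUpperTriangular := fun s t => hu₁up s t
  have hu₂ : u₂.IsUpperTriangular := fun s t => hu₂up s t
  have := invertibleOfIsUnitDet ub₂ (by simp [det_eq_one_of_isLowerTriangular hub₂ hub₂diag])
  have := invertibleOfIsUnitDet u₁ (by simp [det_eq_one_of_isUpperTriangular hu₁ hu₁diag])
  have hub₂inv := blockTriangular_inv_of_blockTriangular hub₂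
  have hu₁inv := blockTriangular_inv_of_blockTriangular hu₁
  have hL1 : ∀ s, (ub₂⁻¹ * ub₁) s s = 1 := hub₂inv.mul_apply_self_eq_one toDual.injective hub₁
    (hub₂.inv_apply_self_eq_one toDual.injective hub₂diag) hub₁diag
  have hU1 : ∀ s, (u₂ * u₁⁻¹) s s = 1 := hu₂.mul_apply_self_eq_one injective_id hu₁inv hu₂diag
    (hu₁.inv_apply_self_eq_one injective_id hu₁diag)
  have key : ub₂⁻¹ * ub₁ * diagonal d₁ = diagonal d₂ * (u₂ * u₁⁻¹) :=
    calc ub₂⁻¹ * ub₁ * diagonal d₁ = ub₂⁻¹ * (ub₁ * diagonal d₁ * u₁) * u₁⁻¹ := by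
          simp [Matrix.mul_assoc]
      _ = ub₂⁻¹ * (ub₂ * diagonal d₂ * u₂) * u₁⁻¹ := by rw [heq]
      _ = diagonal d₂ * (u₂ * u₁⁻¹) := by simp [← Matrix.mul_assoc]
  obtain ⟨hL, hU, hd⟩ := eq_one_of_mul_diagonal_eq_diagonal_mul (hub₂inv.mul hub₁) hL1
    (hu₂.mul hu₁inv) hU1 (fun s hs => hd₁ s (Fin.val_lt_sub_one_of_not_isMax hs))
    (fun s hs => hd₂ s (Fin.val_lt_sub_one_of_not_isMax hs)) key
  refine ⟨?_, hd, ?_⟩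
  · rwa [inv_mul_eq_iff_eq_mul_of_invertible, Matrix.mul_one] at hL
  · rw [mul_inv_eq_iff_eq_mul_of_invertible, Matrix.one_mul] at hU
    exact hU.symm
end

section
/- With notation as in the context, assume the matrices a₂, a₄, …, a_{2r} are invertible. Then det N(b; a₁,…,a_{2r+1}; X, X', Y) = (−1)^{j·r} · det([ Y·b·X | Y·a₁·a₂^{-1}·a₃·a₄^{-1}·⋯·a_{2r−1}·a_{2r}^{-1}·a_{2r+1}·X' ]) · ∏_{s=1}^{r} det(a_{2s}), where [ A | B ] denotes the (i+j)×(i+j) matrix whose first i columns form the block A = Y·b·X and whose last j columns form the block B = Y·a₁·a₂^{-1}·a₃·⋯·a_{2r}^{-1}·a_{2r+1}·X'. -/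
/-- The block matrix `N(b; a₁,…,a_{2r+1}; X, X', Y)`: rows are blocks `R₀` (size `i+j`) and
`R₁,…,R_r` (size `l` each), columns are blocks `C₋ᵢ` (size `i`), `C₋ⱼ` (size `j`) and
`C₁,…,C_r` (size `l` each); the nonzero blocks are `(R₀,C₋ᵢ) = Y·b·X`, `(R₀,C₁) = Y·a₁`,
`(R_s,C_s) = a_{2s}`, `(R_s,C_{s+1}) = a_{2s+1}` and `(R_r,C₋ⱼ) = a_{2r+1}·X'`. -/
def NN (k : Type*) [Field k] (l r i j : ℕ)
    (b : Matrix (Fin l) (Fin l) k) (a : ℕ → Matrix (Fin l) (Fin l) k)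
    (X : Matrix (Fin l) (Fin i) k) (X' : Matrix (Fin l) (Fin j) k)
    (Y : Matrix (Fin i ⊕ Fin j) (Fin l) k) :
    Matrix ((Fin i ⊕ Fin j) ⊕ Fin r × Fin l) ((Fin i ⊕ Fin j) ⊕ Fin r × Fin l) k :=
  Matrix.of fun row col =>
    match row, col with
    | Sum.inl ρ, Sum.inl (Sum.inl ci) => (Y * b * X) ρ ci
    | Sum.inl _, Sum.inl (Sum.inr _) => 0
    | Sum.inl ρ, Sum.inr (s, q) => if (s : ℕ) = 0 then (Y * a 1) ρ q else 0
    | Sum.inr (_, _), Sum.inl (Sum.inl _) => 0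
    | Sum.inr (s, p), Sum.inl (Sum.inr cj) =>
        if (s : ℕ) = r - 1 then (a (2 * r + 1) * X') p cj else 0
    | Sum.inr (s, p), Sum.inr (t, q) =>
        if t = s then a (2 * (s : ℕ) + 2) p q
        else if (t : ℕ) = (s : ℕ) + 1 then a (2 * (s : ℕ) + 3) p q else 0

/-!
Split `N` as a 2×2 block matrix, the lower right block `D` being indexed by `R₁,…,R_r` and
`C₁,…,C_r`. Then `D` is block upper bidiagonal with diagonal blocks `a₂, a₄, …, a_{2r}`, so
`det D = ∏ det a_{2s}` and `D` is invertible, and the Schur complement formula gives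
`det N = det D · det (A - B D⁻¹ C)`. Here `B` is `Y a₁` placed in `C₁` and `C` is `a_{2r+1} X'`
placed in `R_r`, so `D⁻¹ C` is found by back substitution; its top block is
`(-1)^(r-1) a₂⁻¹ a₃ a₄⁻¹ ⋯ a_{2r}⁻¹ a_{2r+1} X'`. Hence the Schur complement is
`[Y b X | (-1)^r Y a₁ a₂⁻¹ ⋯ a_{2r}⁻¹ a_{2r+1} X']`, whose determinant is `(-1)^(j r) sⁿ_{i,j}`.
Blocks are indexed from `0`, so block `s` below is the paper's `R_{s+1}`, `C_{s+1}`.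
-/

namespace Matrix

variable {R : Type*} [CommRing R] {m n o : Type*}

section BlockBidiagonal

def blockBidiagonal (r : ℕ) (d e : ℕ → Matrix m m R) : Matrix (Fin r × m) (Fin r × m) R :=
  of fun x y => if y.1 = x.1 then d x.1 x.2 y.2
    else if (y.1 : ℕ) = x.1 + 1 then e x.1 x.2 y.2 else 0

def blockColumn (r : ℕ) (Z : ℕ → Matrix m n R) : Matrix (Fin r × m) n R :=
  of fun x c => Z x.1 x.2 c

def blockRow (r : ℕ) (Z : ℕ → Matrix o m R) : Matrix o (Fin r × m) R :=
  of fun c x => Z x.1 c x.2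

theorem blockTriangular_blockBidiagonal (r : ℕ) (d e : ℕ → Matrix m m R) :
    (blockBidiagonal r d e).BlockTriangular Prod.fst := by
  rintro ⟨s, p⟩ ⟨t, q⟩ (h : t < s)
  simp only [blockBidiagonal, of_apply, h.ne, if_false]
  rw [if_neg (by omega)]

theorem det_blockBidiagonal [Fintype m] [DecidableEq m] (r : ℕ) (d e : ℕ → Matrix m m R) :
    (blockBidiagonal r d e).det = ∏ s : Fin r, (d s).det := by
  rw [(blockTriangular_blockBidiagonal r d e).det_fintype]
  refine Finset.prod_congr rfl fun s _ => ?_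
  let fiber : m ≃ {x : Fin r × m // x.1 = s} :=
    { toFun := fun q => ⟨(s, q), rfl⟩
      invFun := fun x => x.1.2
      left_inv := fun _ => rfl
      right_inv := by rintro ⟨⟨t, q⟩, rfl⟩; rfl }
  rw [← det_submatrix_equiv_self fiber]
  congr 1
  ext p q
  simp [fiber, blockBidiagonal, toSquareBlock_def]

variable [Fintype m]

theorem blockRow_mul_blockColumn (r : ℕ) (Z' : ℕ → Matrix o m R) (Z : ℕ → Matrix m n R) :
    blockRow r Z' * blockColumn r Z = ∑ s : Fin r, Z' s * Z s := by
  ext c c'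
  simp [blockRow, blockColumn, mul_apply, Fintype.sum_prod_type, sum_apply]

theorem blockBidiagonal_mul_blockColumn (r : ℕ) (d e : ℕ → Matrix m m R)
    (Z : ℕ → Matrix m n R) :
    blockBidiagonal r d e * blockColumn r Z =
      blockColumn r (fun s => d s * Z s + if s + 1 < r then e s * Z (s + 1) else 0) := by
  ext ⟨s, p⟩ c
  rw [mul_apply, Fintype.sum_prod_type]
  by_cases h : (s : ℕ) + 1 < r
  · have hsucc : ∀ t : Fin r, (t : ℕ) = s + 1 ↔ t = ⟨s + 1, h⟩ := fun t => by simp [Fin.ext_iff]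
    have hne : (⟨s + 1, h⟩ : Fin r) ≠ s := by simp [Fin.ext_iff]
    simp [blockBidiagonal, blockColumn, hsucc, h, hne, ite_mul, Finset.sum_ite, mul_apply,
      Finset.filter_eq']
  · have hsucc : ∀ t : Fin r, (t : ℕ) ≠ s + 1 := by omega
    simp [blockBidiagonal, blockColumn, hsucc, h, ite_mul, mul_apply]

end BlockBidiagonal

section BackSubstitution

variable [Fintype m] [DecidableEq m] (a : ℕ → Matrix m m R) (r : ℕ)

noncomputable def alternatingProd (s : ℕ) : Matrix m m R :=
  ((List.range' s (r - s)).map fun u => a (2 * u + 1) * (a (2 * u + 2))⁻¹).prod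

theorem alternatingProd_of_lt {s : ℕ} (h : s < r) :
    alternatingProd a r s = a (2 * s + 1) * (a (2 * s + 2))⁻¹ * alternatingProd a r (s + 1) := by
  rw [alternatingProd, show r - s = r - (s + 1) + 1 by omega, List.range'_succ, List.map_cons,
    List.prod_cons]
  rfl

theorem alternatingProd_self : alternatingProd a r r = 1 := by
  simp [alternatingProd]

theorem alternatingProd_zero :
    alternatingProd a r 0 =
      ((List.range r).map fun u => a (2 * u + 1) * (a (2 * u + 2))⁻¹).prod := by
  simp [alternatingProd, List.range_eq_range']

noncomputable def backSubst (V : Matrix m n R) (s : ℕ) : Matrix m n R :=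
  (-1 : R) ^ (r - 1 - s) • ((a (2 * s + 2))⁻¹ * alternatingProd a r (s + 1) * V)

theorem backSubst_spec (V : Matrix m n R) {s : ℕ} (hs : s < r)
    (hu : IsUnit (a (2 * s + 2)).det) :
    a (2 * s + 2) * backSubst a r V s +
        (if s + 1 < r then a (2 * s + 3) * backSubst a r V (s + 1) else 0) =
      if s = r - 1 then V else 0 := by
  have hdiag : a (2 * s + 2) * backSubst a r V s =
      (-1 : R) ^ (r - 1 - s) • (alternatingProd a r (s + 1) * V) := by
    rw [backSubst, Matrix.mul_smul, Matrix.mul_assoc, mul_nonsing_inv_cancel_left _ _ hu]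
  by_cases hlast : s + 1 < r
  · have hsign : (-1 : R) ^ (r - 1 - s) = -(-1) ^ (r - 1 - (s + 1)) := by
      rw [show r - 1 - s = r - 1 - (s + 1) + 1 by omega, pow_succ, mul_neg_one]
    rw [hdiag, if_pos hlast, if_neg (by omega), backSubst, Matrix.mul_smul, hsign,
      alternatingProd_of_lt a r hlast, show 2 * (s + 1) + 1 = 2 * s + 3 by ring]
    simp only [Matrix.mul_assoc, neg_smul, neg_add_cancel]
  · rw [hdiag, if_neg hlast, if_pos (by omega), show s + 1 = r by omega, alternatingProd_self,
      show r - 1 - s = 0 by omega]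
    simp

theorem mul_backSubst_zero (V : Matrix m n R) (hr : 0 < r) :
    a 1 * backSubst a r V 0 = (-1 : R) ^ (r - 1) • (alternatingProd a r 0 * V) := by
  rw [backSubst, alternatingProd_of_lt a r hr, Matrix.mul_smul]
  simp only [Matrix.mul_assoc]
  rfl

theorem invOf_blockBidiagonal_mul_blockColumn (hu : ∀ s < r, IsUnit (a (2 * s + 2)).det)
    (V : Matrix m n R)
    [Invertible (blockBidiagonal r (fun s => a (2 * s + 2)) fun s => a (2 * s + 3))] :
    ⅟(blockBidiagonal r (fun s => a (2 * s + 2)) fun s => a (2 * s + 3)) *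
        blockColumn r (fun s => if s = r - 1 then V else 0) =
      blockColumn r (backSubst a r V) := by
  have hsolve : (blockBidiagonal r (fun s => a (2 * s + 2)) fun s => a (2 * s + 3)) *
      blockColumn r (backSubst a r V) = blockColumn r (fun s => if s = r - 1 then V else 0) := by
    rw [blockBidiagonal_mul_blockColumn]
    ext ⟨s, p⟩ c
    simp only [blockColumn, of_apply]
    rw [backSubst_spec a r V s.isLt (hu s s.isLt)]
  rw [← hsolve, Matrix.invOf_mul_cancel_left]

theorem blockRow_mul_invOf_blockBidiagonal_mul_blockColumn (hr : 0 < r)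
    (hu : ∀ s < r, IsUnit (a (2 * s + 2)).det) (M : Matrix o m R) (V : Matrix m n R)
    [Invertible (blockBidiagonal r (fun s => a (2 * s + 2)) fun s => a (2 * s + 3))] :
    (blockRow r fun s => if s = 0 then M * a 1 else 0) *
        ⅟(blockBidiagonal r (fun s => a (2 * s + 2)) fun s => a (2 * s + 3)) *
        blockColumn r (fun s => if s = r - 1 then V else 0) =
      (-1 : R) ^ (r - 1) • (M * (alternatingProd a r 0 * V)) := by
  rw [Matrix.mul_assoc, invOf_blockBidiagonal_mul_blockColumn a r hu, blockRow_mul_blockColumn,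
    Fintype.sum_eq_single ⟨0, hr⟩ fun s hs => by
      rw [if_neg (by simpa [Fin.ext_iff] using hs), Matrix.zero_mul],
    Fin.val_mk, if_pos rfl, Matrix.mul_assoc, mul_backSubst_zero a r V hr, Matrix.mul_smul]

end BackSubstitution

theorem det_fromCols_smul_right {n₁ n₂ : Type*} [Fintype n₁] [Fintype n₂] [DecidableEq n₁]
    [DecidableEq n₂] (A : Matrix (n₁ ⊕ n₂) n₁ R) (B : Matrix (n₁ ⊕ n₂) n₂ R) (c : R) :
    (fromCols A (c • B)).det = c ^ Fintype.card n₂ * (fromCols A B).det := by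
  have hdiag : fromCols A (c • B) = fromCols A B * diagonal (Sum.elim 1 fun _ => c) := by
    ext x (y | y) <;> simp [mul_comm]
  rw [hdiag, det_mul, det_diagonal, Fintype.prod_sum_type]
  simp [mul_comm]

end Matrix

open Matrix

theorem NN_eq_fromBlocks (k : Type*) [Field k] (l r i j : ℕ)
    (b : Matrix (Fin l) (Fin l) k) (a : ℕ → Matrix (Fin l) (Fin l) k)
    (X : Matrix (Fin l) (Fin i) k) (X' : Matrix (Fin l) (Fin j) k)
    (Y : Matrix (Fin i ⊕ Fin j) (Fin l) k) :
    NN k l r i j b a X X' Y =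
      fromBlocks (fromCols (Y * b * X) 0) (blockRow r fun s => if s = 0 then Y * a 1 else 0)
        (blockColumn r fun s => if s = r - 1 then fromCols 0 (a (2 * r + 1) * X') else 0)
        (blockBidiagonal r (fun s => a (2 * s + 2)) fun s => a (2 * s + 3)) := by
  ext (ρ | ⟨s, p⟩) ((c | c) | ⟨t, q⟩) <;>
    simp [NN, blockRow, blockColumn, blockBidiagonal, Matrix.ite_apply]

theorem stmt7_general (k : Type*) [Field k] (l r i j : ℕ)
    (hr : 1 ≤ r)
    (b : Matrix (Fin l) (Fin l) k) (a : ℕ → Matrix (Fin l) (Fin l) k)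
    (X : Matrix (Fin l) (Fin i) k) (X' : Matrix (Fin l) (Fin j) k)
    (Y : Matrix (Fin i ⊕ Fin j) (Fin l) k)
    (hinv : ∀ s : ℕ, 1 ≤ s → s ≤ r → IsUnit (a (2 * s)).det) :
    (NN k l r i j b a X X' Y).det =
      (-1 : k) ^ (j * r) *
        (Matrix.of fun (ρ c : Fin i ⊕ Fin j) =>
          Sum.elim ((Y * b * X) ρ)
            ((Y * (((List.range r).map fun s => a (2 * s + 1) * (a (2 * s + 2))⁻¹).prod *
                a (2 * r + 1)) * X') ρ) c).det *
        ∏ s ∈ Finset.range r, (a (2 * s + 2)).det := by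
  have hunit : ∀ s < r, IsUnit (a (2 * s + 2)).det := fun s _ => hinv (s + 1) (by omega) (by omega)
  have hdetD : (blockBidiagonal r (fun s => a (2 * s + 2)) fun s => a (2 * s + 3)).det =
      ∏ s ∈ Finset.range r, (a (2 * s + 2)).det := by
    rw [det_blockBidiagonal, Fin.prod_univ_eq_prod_range (fun s => (a (2 * s + 2)).det)]
  have : Invertible (blockBidiagonal r (fun s => a (2 * s + 2)) fun s => a (2 * s + 3)) :=
    invertibleOfIsUnitDet _ <| by
      rw [hdetD]
      exact IsUnit.prod_iff.2 fun s hs => hunit s (Finset.mem_range.1 hs)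
  have hcompl : fromCols (Y * b * X) 0 - (blockRow r fun s => if s = 0 then Y * a 1 else 0) *
      ⅟(blockBidiagonal r (fun s => a (2 * s + 2)) fun s => a (2 * s + 3)) *
      blockColumn r (fun s => if s = r - 1 then fromCols 0 (a (2 * r + 1) * X') else 0) =
      fromCols (Y * b * X) ((-1 : k) ^ r • (Y * (((List.range r).map fun s =>
        a (2 * s + 1) * (a (2 * s + 2))⁻¹).prod * a (2 * r + 1)) * X')) := by
    rw [blockRow_mul_invOf_blockBidiagonal_mul_blockColumn a r hr hunit, alternatingProd_zero]
    have hsign : -(-1 : k) ^ (r - 1) = (-1) ^ r := by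
      conv_rhs => rw [← Nat.sub_add_cancel hr, pow_succ, mul_neg_one]
    ext x (y | y) <;> simp [← hsign, Matrix.mul_assoc, mul_fromCols]
  rw [NN_eq_fromBlocks, det_fromBlocks₂₂, hdetD, hcompl, det_fromCols_smul_right, Fintype.card_fin,
    ← pow_mul, mul_comm r j, mul_comm]
  -- the matrix `of fun ρ c => Sum.elim …` of the statement is `fromCols` unfolded
  rfl

theorem stmt7 (k : Type*) [Field k] (l r i j : ℕ)
    (hl : 1 ≤ l) (hr : 1 ≤ r) (hi : 1 ≤ i) (hj : 1 ≤ j)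
    (b : Matrix (Fin l) (Fin l) k) (a : ℕ → Matrix (Fin l) (Fin l) k)
    (X : Matrix (Fin l) (Fin i) k) (X' : Matrix (Fin l) (Fin j) k)
    (Y : Matrix (Fin i ⊕ Fin j) (Fin l) k)
    (hinv : ∀ s : ℕ, 1 ≤ s → s ≤ r → IsUnit (a (2 * s)).det) :
    (NN k l r i j b a X X' Y).det =
      (-1 : k) ^ (j * r) *
        (Matrix.of fun (ρ c : Fin i ⊕ Fin j) =>
          Sum.elim ((Y * b * X) ρ)
            ((Y * (((List.range r).map fun s => a (2 * s + 1) * (a (2 * s + 2))⁻¹).prod *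
                a (2 * r + 1)) * X') ρ) c).det *
        ∏ s ∈ Finset.range r, (a (2 * s + 2)).det :=
  stmt7_general k l r i j hr b a X X' Y hinv
end

section
/- With notation as in the context, assume additionally that j ≤ l (no invertibility assumptions on the matrices are needed), and let t, t₁, …, t_{2r+1} be scalars in k. Then det N(t·b; t₁·a₁, t₂·a₂, …, t_{2r+1}·a_{2r+1}; X, X', Y) = tⁱ · (∏_{s=0}^{r} t_{2s+1}ʲ) · (∏_{s=1}^{r} t_{2s}^{l−j}) · det N(b; a₁,…,a_{2r+1}; X, X', Y); that is, det N is multihomogeneous in (b, a₁, a₂, …, a_{2r+1}) of multidegree (i, j, l−j, j, l−j, …, l−j, j). -/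
/-!
Expand the determinant by the Leibniz formula. The nonzero blocks of `N` form a path
`C₋ᵢ — R₀ — C₁ — R₁ — ⋯ — C_r — R_r — C₋ⱼ` whose vertices we number `0, 1, …, 2r+2`; the block
scaled by `t_m` (by `t` when `m = 0`) is the edge between `m` and `m+1`. For a permutation `σ`
contributing a nonzero term, the entries `(σ x, x)` lying on that edge are exactly the crossings
of the cut between positions `≤ m` and `> m`; as rows sit at odd and columns at even positions,
they all cross in the same direction, so their number is the difference between the numbers of
row and column indices at positions `≤ m`. This does not depend on `σ`: it is `i` for `m = 0`,
`j` for odd `m` and `l - j` for even `m > 0`. Hence every nonzero term is scaled by the same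
factor.
-/

open Finset

theorem Matrix.det_eq_mul_det_of_apply_eq_mul {ι R : Type*} [Fintype ι] [DecidableEq ι]
    [CommRing R] {M M' : Matrix ι ι R} (c : ι → ι → R) (μ : R)
    (hM' : ∀ x y, M' x y = c x y * M x y)
    (hc : ∀ σ : Equiv.Perm ι, (∀ x, M (σ x) x ≠ 0) → ∏ x, c (σ x) x = μ) :
    M'.det = μ * M.det := by
  rw [Matrix.det_apply', Matrix.det_apply', mul_sum]
  refine sum_congr rfl fun σ _ => ?_
  simp only [hM', prod_mul_distrib]
  by_cases hσ : ∀ x, M (σ x) x ≠ 0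
  · rw [hc σ hσ]
    ring
  · obtain ⟨x, hx⟩ := not_forall_not.mp hσ
    have hzero : ∏ x, M (σ x) x = 0 := prod_eq_zero (mem_univ x) hx
    rw [hzero]
    ring

theorem ite_min_eq_of_adjacent {a b m : ℕ} (ha : Odd a) (hb : Even b)
    (hab : a = b + 1 ∨ b = a + 1) :
    (if min a b = m then 1 else 0 : ℤ) =
      (-1) ^ (m + 1) * ((if a ≤ m then 1 else 0) - (if b ≤ m then 1 else 0)) := by
  obtain ⟨a, rfl⟩ := ha
  obtain ⟨b, rfl⟩ := hb
  rcases Nat.even_or_odd m with hm | hm <;> rw [hm.add_one.neg_one_pow] <;>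
    obtain ⟨m, rfl⟩ := hm <;> split_ifs <;> omega

theorem card_filter_min_eq_of_adjacent {ι : Type*} [Fintype ι] (σ : Equiv.Perm ι)
    {p q : ι → ℕ} (hp : ∀ x, Odd (p x)) (hq : ∀ x, Even (q x))
    (hadj : ∀ x, p (σ x) = q x + 1 ∨ q x = p (σ x) + 1) (m : ℕ) :
    (#{x | min (p (σ x)) (q x) = m} : ℤ) =
      (-1) ^ (m + 1) * ∑ x, ((if p x ≤ m then 1 else 0) - (if q x ≤ m then 1 else 0)) := by
  rw [natCast_card_filter, sum_sub_distrib,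
    ← Equiv.sum_comp σ (fun x => if p x ≤ m then _ else _), ← sum_sub_distrib, mul_sum]
  exact sum_congr rfl fun x _ => ite_min_eq_of_adjacent (hp _) (hq x) (hadj x)

theorem Finset.prod_range_two_mul_add_two {M : Type*} [CommMonoid M] (f : ℕ → M) (n : ℕ) :
    ∏ m ∈ range (2 * n + 2), f m =
      f 0 * (∏ s ∈ range (n + 1), f (2 * s + 1)) * ∏ s ∈ range n, f (2 * s + 2) := by
  induction n with
  | zero => simp [prod_range_succ]
  | succ n ih =>
    rw [show 2 * (n + 1) + 2 = 2 * n + 2 + 1 + 1 by ring, prod_range_succ, prod_range_succ, ih]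
    simp only [prod_range_succ]
    ring_nf
    ac_rfl

namespace NN

variable {k : Type*} [Field k] {l r i j : ℕ}

-- `Sum.inr (s, _)` indexes the blocks `R_{s+1}` and `C_{s+1}`, at positions `2s+3` and `2s+2`.
def rowPos : (Fin i ⊕ Fin j) ⊕ Fin r × Fin l → ℕ
  | Sum.inl _ => 1
  | Sum.inr (s, _) => 2 * s + 3

def colPos : (Fin i ⊕ Fin j) ⊕ Fin r × Fin l → ℕ
  | Sum.inl (Sum.inl _) => 0
  | Sum.inl (Sum.inr _) => 2 * r + 2
  | Sum.inr (s, _) => 2 * s + 2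

theorem odd_rowPos (x : (Fin i ⊕ Fin j) ⊕ Fin r × Fin l) : Odd (rowPos x) := by
  rcases x with _ | ⟨s, _⟩
  · exact odd_one
  · exact ⟨s + 1, by simp only [rowPos]; ring⟩

theorem even_colPos (x : (Fin i ⊕ Fin j) ⊕ Fin r × Fin l) : Even (colPos x) := by
  rcases x with (_ | _) | ⟨s, _⟩
  · exact Even.zero
  · exact ⟨r + 1, by simp only [colPos]; ring⟩
  · exact ⟨s + 1, by simp only [colPos]; ring⟩

theorem rowPos_lt (x : (Fin i ⊕ Fin j) ⊕ Fin r × Fin l) : rowPos x < 2 * r + 2 := by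
  rcases x with _ | ⟨s, _⟩ <;> simp only [rowPos] <;> omega

variable {b : Matrix (Fin l) (Fin l) k} {a : ℕ → Matrix (Fin l) (Fin l) k}
  {X : Matrix (Fin l) (Fin i) k} {X' : Matrix (Fin l) (Fin j) k}
  {Y : Matrix (Fin i ⊕ Fin j) (Fin l) k}

theorem smul_apply (t : k) (ts : ℕ → k) (x y : (Fin i ⊕ Fin j) ⊕ Fin r × Fin l) :
    NN k l r i j (t • b) (fun q => ts q • a q) X X' Y x y =
      Function.update ts 0 t (min (rowPos x) (colPos y)) * NN k l r i j b a X X' Y x y := by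
  rcases x with ρ | ⟨u, p⟩ <;> rcases y with (ci | cj) | ⟨s, q⟩ <;>
    simp [NN, rowPos, colPos, Matrix.mul_smul, Matrix.smul_mul]
  all_goals split_ifs with h <;> (try subst h) <;> (try congr 2) <;> omega

theorem rowPos_adjacent_colPos_of_apply_ne_zero {x y : (Fin i ⊕ Fin j) ⊕ Fin r × Fin l}
    (h : NN k l r i j b a X X' Y x y ≠ 0) :
    rowPos x = colPos y + 1 ∨ colPos y = rowPos x + 1 := by
  rcases x with ρ | ⟨u, p⟩ <;> rcases y with (ci | cj) | ⟨s, q⟩ <;>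
    simp [NN, rowPos, colPos, Fin.ext_iff] at h ⊢
  all_goals (try split_ifs at h) <;> first | omega | simp at h

theorem sum_rowPos_le_sub_colPos_le_zero :
    ∑ x : (Fin i ⊕ Fin j) ⊕ Fin r × Fin l,
      ((if rowPos x ≤ 0 then 1 else 0) - (if colPos x ≤ 0 then 1 else 0) : ℤ) = -i := by
  simp only [Fintype.sum_sum_type, Fintype.sum_prod_type]
  simp [rowPos, colPos]

theorem sum_rowPos_le_sub_colPos_le_odd {u : ℕ} (hu : u ≤ r) :
    ∑ x : (Fin i ⊕ Fin j) ⊕ Fin r × Fin l,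
      ((if rowPos x ≤ 2 * u + 1 then 1 else 0) -
        (if colPos x ≤ 2 * u + 1 then 1 else 0) : ℤ) = j := by
  have hblock : ∀ (s : Fin r) (q : Fin l),
      ((if rowPos (.inr (s, q) : (Fin i ⊕ Fin j) ⊕ _) ≤ 2 * u + 1 then 1 else 0) -
        (if colPos (.inr (s, q) : (Fin i ⊕ Fin j) ⊕ _) ≤ 2 * u + 1 then 1 else 0) : ℤ) = 0 := by
    intro s q
    simp only [rowPos, colPos]
    split_ifs <;> omega
  simp only [Fintype.sum_sum_type, Fintype.sum_prod_type, hblock]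
  simp [rowPos, colPos]
  omega

theorem sum_rowPos_le_sub_colPos_le_even {u : ℕ} (hu : u < r) :
    ∑ x : (Fin i ⊕ Fin j) ⊕ Fin r × Fin l,
      ((if rowPos x ≤ 2 * u + 2 then 1 else 0) -
        (if colPos x ≤ 2 * u + 2 then 1 else 0) : ℤ) = j - l := by
  have hblock : ∀ (s : Fin r) (q : Fin l),
      ((if rowPos (.inr (s, q) : (Fin i ⊕ Fin j) ⊕ _) ≤ 2 * u + 2 then 1 else 0) -
        (if colPos (.inr (s, q) : (Fin i ⊕ Fin j) ⊕ _) ≤ 2 * u + 2 then 1 else 0) : ℤ) =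
        if s = ⟨u, hu⟩ then -1 else 0 := by
    intro s q
    simp only [rowPos, colPos, Fin.ext_iff]
    split_ifs <;> omega
  simp only [Fintype.sum_sum_type, Fintype.sum_prod_type, hblock]
  rw [sum_comm]
  simp [rowPos, colPos]
  omega

theorem prod_update_min_rowPos_colPos (t : k) (ts : ℕ → k)
    (σ : Equiv.Perm ((Fin i ⊕ Fin j) ⊕ Fin r × Fin l))
    (hσ : ∀ x, NN k l r i j b a X X' Y (σ x) x ≠ 0) :
    ∏ x, Function.update ts 0 t (min (rowPos (σ x)) (colPos x)) =
      t ^ i * (∏ s ∈ range (r + 1), ts (2 * s + 1) ^ j) *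
        ∏ s ∈ range r, ts (2 * s + 2) ^ (l - j) := by
  have hcard := card_filter_min_eq_of_adjacent σ odd_rowPos even_colPos
    fun x => rowPos_adjacent_colPos_of_apply_ne_zero (hσ x)
  have hmem : ∀ x ∈ univ, min (rowPos (σ x)) (colPos x) ∈ range (2 * r + 2) :=
    fun x _ => mem_range.2 ((min_le_left _ _).trans_lt (rowPos_lt _))
  rw [← prod_fiberwise_of_maps_to' hmem, prod_range_two_mul_add_two]
  simp only [prod_const]
  congr 1
  · congr 1
    · have h := hcard 0
      rw [sum_rowPos_le_sub_colPos_le_zero] at h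
      rw [Function.update_self]
      congr 1
      omega
    · refine prod_congr rfl fun s hs => ?_
      have h := hcard (2 * s + 1)
      rw [sum_rowPos_le_sub_colPos_le_odd (Nat.lt_succ_iff.1 (mem_range.1 hs)),
        (Even.neg_one_pow ⟨s + 1, by ring⟩ : (-1 : ℤ) ^ (2 * s + 1 + 1) = 1)] at h
      rw [Function.update_of_ne (by omega)]
      congr 1
      omega
  · refine prod_congr rfl fun s hs => ?_
    have h := hcard (2 * s + 2)
    rw [sum_rowPos_le_sub_colPos_le_even (mem_range.1 hs),
      (Odd.neg_one_pow ⟨s + 1, by ring⟩ : (-1 : ℤ) ^ (2 * s + 2 + 1) = -1)] at h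
    rw [Function.update_of_ne (by omega)]
    congr 1
    omega

end NN

theorem stmt8_general (k : Type*) [Field k] (l r i j : ℕ)
    (b : Matrix (Fin l) (Fin l) k) (a : ℕ → Matrix (Fin l) (Fin l) k)
    (X : Matrix (Fin l) (Fin i) k) (X' : Matrix (Fin l) (Fin j) k)
    (Y : Matrix (Fin i ⊕ Fin j) (Fin l) k)
    (t : k) (ts : ℕ → k) :
    (NN k l r i j (t • b) (fun q => ts q • a q) X X' Y).det =
      t ^ i * (∏ s ∈ Finset.range (r + 1), ts (2 * s + 1) ^ j) *
        (∏ s ∈ Finset.range r, ts (2 * s + 2) ^ (l - j)) *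
        (NN k l r i j b a X X' Y).det :=
  Matrix.det_eq_mul_det_of_apply_eq_mul _ _ (NN.smul_apply t ts)
    fun σ hσ => NN.prod_update_min_rowPos_colPos t ts σ hσ

theorem stmt8 (k : Type*) [Field k] (l r i j : ℕ)
    (hl : 1 ≤ l) (hr : 1 ≤ r) (hi : 1 ≤ i) (hj : 1 ≤ j) (hjl : j ≤ l)
    (b : Matrix (Fin l) (Fin l) k) (a : ℕ → Matrix (Fin l) (Fin l) k)
    (X : Matrix (Fin l) (Fin i) k) (X' : Matrix (Fin l) (Fin j) k)
    (Y : Matrix (Fin i ⊕ Fin j) (Fin l) k)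
    (t : k) (ts : ℕ → k) :
    (NN k l r i j (t • b) (fun q => ts q • a q) X X' Y).det =
      t ^ i * (∏ s ∈ Finset.range (r + 1), ts (2 * s + 1) ^ j) *
        (∏ s ∈ Finset.range r, ts (2 * s + 2) ^ (l - j)) *
        (NN k l r i j b a X X' Y).det :=
  stmt8_general k l r i j b a X X' Y t ts
end
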